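/- arXiv:1706.06540 — 4 statements merged into one kernel-verified Lean document; each statement's English description precedes it below -/
import Mathlib

section
/- Let (L, [·,·], Δ) be a Lie superbialgebra and let β : L → L be an even linear map which is a morphism of Lie superbialgebras (β∘[·,·] = [·,·]∘β^{⊗2} and Δ∘β = β^{⊗2}∘Δ). Then L_β = (L, β∘[·,·], Δ∘β, β) is a multiplicative Hom-Lie superbialgebra. -/
open TensorProduct

variable (K : Type*) [Field K] [CharZero K]

/-- The super sign `(-1)^{p·q}` for parities `p q : ZMod 2`. -/
def eps (p q : ZMod 2) : K := (-1 : K) ^ (p.val * q.val)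

variable {K}

section Defs

variable {L M : Type*} [AddCommGroup L] [Module K L] [AddCommGroup M] [Module K M]

/-- `x` is homogeneous of parity `p` with respect to the grading involution `σ`
(`σ` acts as `(-1)^i` on the degree-`i` part of the `ℤ₂`-graded space). -/
def IsHomog (σ : L →ₗ[K] L) (p : ZMod 2) (x : L) : Prop :=
  σ x = ((-1 : K) ^ p.val) • x

/-- The operator multiplying a homogeneous element of parity `q` by `(-1)^{p·q}`. -/
noncomputable def signPow (σ : L →ₗ[K] L) (p : ZMod 2) : L →ₗ[K] L :=
  ((2 : K)⁻¹ * (1 + (-1 : K) ^ p.val)) • (LinearMap.id : L →ₗ[K] L)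
    + ((2 : K)⁻¹ * (1 - (-1 : K) ^ p.val)) • σ

/-- The operator multiplying `x ⊗ y` (with `x, y` homogeneous of parities `p, q`)
by the Koszul sign `(-1)^{p·q}`. -/
noncomputable def signOp (σL : L →ₗ[K] L) (σM : M →ₗ[K] M) :
    L ⊗[K] M →ₗ[K] L ⊗[K] M :=
  (2 : K)⁻¹ • ((LinearMap.id : L ⊗[K] M →ₗ[K] L ⊗[K] M)
    + TensorProduct.map σL LinearMap.id
    + TensorProduct.map LinearMap.id σM
    - TensorProduct.map σL σM)

/-- The super twist `τ(x ⊗ y) = (-1)^{|x||y|} y ⊗ x`. -/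
noncomputable def superTwist (σ : L →ₗ[K] L) : L ⊗[K] L →ₗ[K] L ⊗[K] L :=
  (TensorProduct.comm K L L).toLinearMap ∘ₗ signOp σ σ

/-- The super cyclic map `ξ(x ⊗ y ⊗ z) = (-1)^{|x|(|y|+|z|)} y ⊗ z ⊗ x`. -/
noncomputable def superCyclic (σ : L →ₗ[K] L) :
    L ⊗[K] (L ⊗[K] L) →ₗ[K] L ⊗[K] (L ⊗[K] L) :=
  (TensorProduct.assoc K L L L).toLinearMap
    ∘ₗ (TensorProduct.comm K L (L ⊗[K] L)).toLinearMap
    ∘ₗ signOp σ (TensorProduct.map σ σ)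

/-- The adjoint action `ad_x` on `L ⊗ L`, for `x` homogeneous of parity `p`:
`ad_x(y₁ ⊗ y₂) = [x,y₁] ⊗ α(y₂) + (-1)^{|x||y₁|} α(y₁) ⊗ [x,y₂]`. -/
noncomputable def adT (σ : L →ₗ[K] L) (br : L →ₗ[K] L →ₗ[K] L) (α : L →ₗ[K] L)
    (p : ZMod 2) (x : L) : L ⊗[K] L →ₗ[K] L ⊗[K] L :=
  TensorProduct.map (br x) α + TensorProduct.map (α ∘ₗ signPow σ p) (br x)

/-- The adjoint action `ad_x` on `L ⊗ (L ⊗ L)`, for `x` homogeneous of parity `p`. -/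
noncomputable def adT3 (σ : L →ₗ[K] L) (br : L →ₗ[K] L →ₗ[K] L) (α : L →ₗ[K] L)
    (p : ZMod 2) (x : L) :
    L ⊗[K] (L ⊗[K] L) →ₗ[K] L ⊗[K] (L ⊗[K] L) :=
  TensorProduct.map (br x) (TensorProduct.map α α)
    + TensorProduct.map (α ∘ₗ signPow σ p) (TensorProduct.map (br x) α)
    + TensorProduct.map (α ∘ₗ signPow σ p)
        (TensorProduct.map (α ∘ₗ signPow σ p) (br x))

/-- A Hom-Lie superalgebra `(L, [·,·], α)` with grading involution `σ`:
the bracket and `α` are even, the bracket is skew-supersymmetric and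
satisfies the Hom-super-Jacobi identity. -/
def IsHomLieSuperalgebra (σ : L →ₗ[K] L) (br : L →ₗ[K] L →ₗ[K] L) (α : L →ₗ[K] L) : Prop :=
  σ ∘ₗ σ = LinearMap.id
  ∧ (∀ x y, σ (br x y) = br (σ x) (σ y))
  ∧ (∀ x, σ (α x) = α (σ x))
  ∧ (∀ p q x y, IsHomog σ p x → IsHomog σ q y → br x y = -(eps K p q) • br y x)
  ∧ (∀ p q r x y z, IsHomog σ p x → IsHomog σ q y → IsHomog σ r z →
      eps K p r • br (α x) (br y z) + eps K r q • br (α z) (br x y)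
        + eps K q p • br (α y) (br z x) = 0)

/-- Multiplicativity: `α([x,y]) = [α(x), α(y)]`. -/
def IsMultiplicative (br : L →ₗ[K] L →ₗ[K] L) (α : L →ₗ[K] L) : Prop :=
  ∀ x y, α (br x y) = br (α x) (α y)

/-- A Hom-Lie supercoalgebra `(L, Δ, α)` with grading involution `σ`. -/
def IsHomLieSupercoalgebra (σ α : L →ₗ[K] L) (Δ : L →ₗ[K] L ⊗[K] L) : Prop :=
  σ ∘ₗ σ = LinearMap.id
  ∧ (∀ x, σ (α x) = α (σ x))
  ∧ TensorProduct.map σ σ ∘ₗ Δ = Δ ∘ₗ σ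
  ∧ (∀ x, ∃ u, Δ x = u - superTwist σ u)
  ∧ (LinearMap.id + superCyclic σ + superCyclic σ ∘ₗ superCyclic σ)
      ∘ₗ TensorProduct.map α Δ ∘ₗ Δ = 0

/-- Co-multiplicativity: `Δ ∘ α = α^{⊗2} ∘ Δ`. -/
def IsComultiplicative (α : L →ₗ[K] L) (Δ : L →ₗ[K] L ⊗[K] L) : Prop :=
  Δ ∘ₗ α = TensorProduct.map α α ∘ₗ Δ

/-- A Hom-Lie superbialgebra `(L, [·,·], Δ, α)`. -/
def IsHomLieSuperbialgebra (σ : L →ₗ[K] L) (br : L →ₗ[K] L →ₗ[K] L) (α : L →ₗ[K] L)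
    (Δ : L →ₗ[K] L ⊗[K] L) : Prop :=
  IsHomLieSuperalgebra σ br α
  ∧ IsHomLieSupercoalgebra σ α Δ
  ∧ ∀ p q x y, IsHomog σ p x → IsHomog σ q y →
      Δ (br x y) = adT σ br α p (α x) (Δ y) - eps K p q • adT σ br α q (α y) (Δ x)

/-- A multiplicative Hom-Lie superbialgebra. -/
def IsMultHomLieSuperbialgebra (σ : L →ₗ[K] L) (br : L →ₗ[K] L →ₗ[K] L) (α : L →ₗ[K] L)
    (Δ : L →ₗ[K] L ⊗[K] L) : Prop :=
  IsHomLieSuperbialgebra σ br α Δ ∧ IsMultiplicative br α ∧ IsComultiplicative α Δ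

/-- An admissible Hom-Lie superalgebra: `[(Id - α²)(x), α(y)] = 0`. -/
def IsAdmissible (σ : L →ₗ[K] L) (br : L →ₗ[K] L →ₗ[K] L) (α : L →ₗ[K] L) : Prop :=
  IsHomLieSuperalgebra σ br α ∧ ∀ x y, br (x - α (α x)) (α y) = 0

/-- A morphism of Hom-Lie superbialgebras: an even linear map commuting with the
twist maps, the brackets and the cobrackets. -/
def IsBialgMorphism {L₂ : Type*} [AddCommGroup L₂] [Module K L₂]
    (σ₁ : L →ₗ[K] L) (br₁ : L →ₗ[K] L →ₗ[K] L) (α₁ : L →ₗ[K] L) (Δ₁ : L →ₗ[K] L ⊗[K] L)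
    (σ₂ : L₂ →ₗ[K] L₂) (br₂ : L₂ →ₗ[K] L₂ →ₗ[K] L₂) (α₂ : L₂ →ₗ[K] L₂)
    (Δ₂ : L₂ →ₗ[K] L₂ ⊗[K] L₂) (f : L →ₗ[K] L₂) : Prop :=
  (∀ x, σ₂ (f x) = f (σ₁ x)) ∧ (∀ x, α₂ (f x) = f (α₁ x))
  ∧ (∀ x y, f (br₁ x y) = br₂ (f x) (f y))
  ∧ TensorProduct.map f f ∘ₗ Δ₁ = Δ₂ ∘ₗ f

/-- A representation `ρ` of the Hom-Lie superalgebra `(L, br, αg)` on `(M, σM)`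
with respect to `A`. -/
def IsRepresentation (σg : L →ₗ[K] L) (br : L →ₗ[K] L →ₗ[K] L) (αg : L →ₗ[K] L)
    (σM A : M →ₗ[K] M) (ρ : L →ₗ[K] M →ₗ[K] M) : Prop :=
  (∀ x v, σM (ρ x v) = ρ (σg x) (σM v))
  ∧ (∀ x, ρ (αg x) ∘ₗ A = A ∘ₗ ρ x)
  ∧ (∀ p q x y, IsHomog σg p x → IsHomog σg q y →
      ρ (br x y) ∘ₗ A = ρ (αg x) ∘ₗ ρ y - eps K p q • (ρ (αg y) ∘ₗ ρ x))

/-- The signed middle-four interchange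
`(r₁ ⊗ r₂) ⊗ (r₁' ⊗ r₂') ↦ (-1)^{|r₂||r₁'|} (r₁ ⊗ r₁') ⊗ (r₂ ⊗ r₂')`. -/
noncomputable def signedMidSwap (σ : L →ₗ[K] L) :
    (L ⊗[K] L) ⊗[K] (L ⊗[K] L) →ₗ[K] (L ⊗[K] L) ⊗[K] (L ⊗[K] L) :=
  (TensorProduct.assoc K (L ⊗[K] L) L L).toLinearMap
    ∘ₗ TensorProduct.map (TensorProduct.assoc K L L L).symm.toLinearMap LinearMap.id
    ∘ₗ TensorProduct.map (TensorProduct.map LinearMap.id (superTwist σ)) LinearMap.id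
    ∘ₗ TensorProduct.map (TensorProduct.assoc K L L L).toLinearMap LinearMap.id
    ∘ₗ (TensorProduct.assoc K (L ⊗[K] L) L L).symm.toLinearMap

/-- `[r₁₂, r'₁₃] = Σ (-1)^{|r'₁||r₂|} [r₁,r'₁] ⊗ α(r₂) ⊗ α(r'₂)`. -/
noncomputable def br1213 (σ : L →ₗ[K] L) (br : L →ₗ[K] L →ₗ[K] L) (α : L →ₗ[K] L)
    (r r' : L ⊗[K] L) : L ⊗[K] (L ⊗[K] L) :=
  TensorProduct.map (TensorProduct.lift br) (TensorProduct.map α α)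
    (signedMidSwap σ (r ⊗ₜ[K] r'))

/-- `[r₁₂, r'₂₃] = Σ α(r₁) ⊗ [r₂,r'₁] ⊗ α(r'₂)`. -/
noncomputable def br1223 (br : L →ₗ[K] L →ₗ[K] L) (α : L →ₗ[K] L)
    (r r' : L ⊗[K] L) : L ⊗[K] (L ⊗[K] L) :=
  TensorProduct.map α
      (TensorProduct.map (TensorProduct.lift br) α
        ∘ₗ (TensorProduct.assoc K L L L).symm.toLinearMap)
    ((TensorProduct.assoc K L L (L ⊗[K] L)).toLinearMap (r ⊗ₜ[K] r'))

/-- `[r₁₃, r'₂₃] = Σ (-1)^{|r'₁||r₂|} α(r₁) ⊗ α(r'₁) ⊗ [r₂,r'₂]`. -/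
noncomputable def br1323 (σ : L →ₗ[K] L) (br : L →ₗ[K] L →ₗ[K] L) (α : L →ₗ[K] L)
    (r r' : L ⊗[K] L) : L ⊗[K] (L ⊗[K] L) :=
  (TensorProduct.assoc K L L L).toLinearMap
    (TensorProduct.map (TensorProduct.map α α) (TensorProduct.lift br)
      (signedMidSwap σ (r ⊗ₜ[K] r')))

/-- The left-hand side `[[r,r]]^α` of the classical Hom-Yang-Baxter equation. -/
noncomputable def chybeEl (σ : L →ₗ[K] L) (br : L →ₗ[K] L →ₗ[K] L) (α : L →ₗ[K] L)
    (r : L ⊗[K] L) : L ⊗[K] (L ⊗[K] L) :=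
  br1213 σ br α r r + br1223 br α r r + br1323 σ br α r r

/-- A coboundary Hom-Lie superbialgebra. -/
def IsCoboundary (σ : L →ₗ[K] L) (br : L →ₗ[K] L →ₗ[K] L) (α : L →ₗ[K] L)
    (Δ : L →ₗ[K] L ⊗[K] L) (r : L ⊗[K] L) : Prop :=
  IsHomLieSuperbialgebra σ br α Δ
  ∧ TensorProduct.map α α r = r
  ∧ ∀ p x, IsHomog σ p x → Δ x = adT σ br α p x r

/-- A quasi-triangular Hom-Lie superbialgebra: a coboundary one where `r`
satisfies the classical Hom-Yang-Baxter equation. -/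
def IsQuasiTriangular (σ : L →ₗ[K] L) (br : L →ₗ[K] L →ₗ[K] L) (α : L →ₗ[K] L)
    (Δ : L →ₗ[K] L ⊗[K] L) (r : L ⊗[K] L) : Prop :=
  IsCoboundary σ br α Δ r ∧ chybeEl σ br α r = 0

/-- The global linear map `x ↦ ad_x(r) = Σ [x,r₁] ⊗ α(r₂) + (-1)^{|x||r₁|} α(r₁) ⊗ [x,r₂]`. -/
noncomputable def adMap (σ : L →ₗ[K] L) (br : L →ₗ[K] L →ₗ[K] L) (α : L →ₗ[K] L)
    (r : L ⊗[K] L) : L →ₗ[K] L ⊗[K] L :=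
  (TensorProduct.map (TensorProduct.lift br) α
      ∘ₗ (TensorProduct.assoc K L L L).symm.toLinearMap
    + TensorProduct.map α (TensorProduct.lift br)
        ∘ₗ (TensorProduct.assoc K L L L).toLinearMap
        ∘ₗ TensorProduct.map (superTwist σ) LinearMap.id
        ∘ₗ (TensorProduct.assoc K L L L).symm.toLinearMap)
  ∘ₗ (TensorProduct.mk K L (L ⊗[K] L)).flip r

end Defs

/-!
A morphism `β` commutes with the grading, the bracket, `α` and `Δ`, so every axiom of the twisted
data `(β [·,·], Δ β, β α)` is the image of the corresponding axiom of `(L, [·,·], Δ, α)` under a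
power of `β`: the twisted Hom-Jacobiator is `β²` of the old one, the twisted co-Jacobiator is
`(β^{⊗3})²` of the old one since `ξ` commutes with `β^{⊗3}`, and the twisted compatibility
condition is `(β^{⊗2})²` of the old one. A Lie superbialgebra is the case `α = id`.
-/

section YauTwist

variable {K : Type*} [Field K] {L : Type*} [AddCommGroup L] [Module K L]
  {σ α β : L →ₗ[K] L} {br : L →ₗ[K] L →ₗ[K] L} {Δ : L →ₗ[K] L ⊗[K] L}

lemma signPow_comp_of_commute (hβσ : ∀ x, σ (β x) = β (σ x)) (p : ZMod 2) :
    signPow σ p ∘ₗ β = β ∘ₗ signPow σ p := by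
  ext x
  simp [signPow, hβσ]

lemma superCyclic_comp_map_of_commute (hβσ : ∀ x, σ (β x) = β (σ x)) :
    superCyclic σ ∘ₗ map β (map β β) = map β (map β β) ∘ₗ superCyclic σ := by
  ext x y z
  simp [superCyclic, signOp, hβσ]

lemma adT_yauTwist (hβσ : ∀ x, σ (β x) = β (σ x)) (hβα : ∀ x, α (β x) = β (α x))
    (hβbr : ∀ x y, β (br x y) = br (β x) (β y)) (p : ZMod 2) (x : L) :
    adT σ (br.compr₂ β) (β ∘ₗ α) p (β x) ∘ₗ map β β
      = map (β ∘ₗ β) (β ∘ₗ β) ∘ₗ adT σ br α p x := by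
  ext y z
  have hs := LinearMap.congr_fun (signPow_comp_of_commute hβσ p) y
  simp only [LinearMap.comp_apply] at hs
  simp [adT, hβbr, hβα, hs]

lemma IsHomLieSuperalgebra.yauTwist (h : IsHomLieSuperalgebra σ br α)
    (hβσ : ∀ x, σ (β x) = β (σ x)) (hβα : ∀ x, α (β x) = β (α x))
    (hβbr : ∀ x y, β (br x y) = br (β x) (β y)) :
    IsHomLieSuperalgebra σ (br.compr₂ β) (β ∘ₗ α) := by
  obtain ⟨hσσ, hσbr, hσα, hskew, hjac⟩ := h
  refine ⟨hσσ, fun x y => ?_, fun x => ?_, fun p q x y hx hy => ?_,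
    fun p q r x y z hx hy hz => ?_⟩
  · simp [hβσ, hσbr]
  · simp [hβσ, hσα]
  · simp [hskew p q x y hx hy]
  · have hjacβ := congrArg (β ∘ₗ β) (hjac p q r x y z hx hy hz)
    simpa [← hβα, hβbr] using hjacβ

lemma map_comp_yauTwist (hβα : ∀ x, α (β x) = β (α x))
    (hβΔ : map β β ∘ₗ Δ = Δ ∘ₗ β) :
    map (β ∘ₗ α) (Δ ∘ₗ β) ∘ₗ Δ ∘ₗ β
      = map β (map β β) ∘ₗ map β (map β β) ∘ₗ map α Δ ∘ₗ Δ := by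
  have hΔ : ∀ z, Δ (β z) = map β β (Δ z) := fun z => (LinearMap.congr_fun hβΔ z).symm
  have hmap : map (β ∘ₗ α) (Δ ∘ₗ β) ∘ₗ map β β
      = map β (map β β) ∘ₗ map β (map β β) ∘ₗ map α Δ := by
    ext x y
    simp [hΔ, hβα]
  calc _ = (map (β ∘ₗ α) (Δ ∘ₗ β) ∘ₗ map β β) ∘ₗ Δ := by rw [LinearMap.comp_assoc, hβΔ]
    _ = _ := by rw [hmap]; simp only [LinearMap.comp_assoc]

lemma IsHomLieSupercoalgebra.yauTwist (h : IsHomLieSupercoalgebra σ α Δ)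
    (hβσ : ∀ x, σ (β x) = β (σ x)) (hβα : ∀ x, α (β x) = β (α x))
    (hβΔ : map β β ∘ₗ Δ = Δ ∘ₗ β) :
    IsHomLieSupercoalgebra σ (β ∘ₗ α) (Δ ∘ₗ β) := by
  obtain ⟨hσσ, hσα, hσΔ, hskew, hjac⟩ := h
  refine ⟨hσσ, fun x => ?_, ?_, fun x => hskew (β x), ?_⟩
  · simp [hβσ, hσα]
  · rw [← LinearMap.comp_assoc, hσΔ, LinearMap.comp_assoc, LinearMap.comp_assoc]
    congr 1
    ext x
    exact hβσ x
  · have hB : Commute (superCyclic σ) (map β (map β β)) := superCyclic_comp_map_of_commute hβσ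
    have hcyc : (LinearMap.id + superCyclic σ + superCyclic σ ∘ₗ superCyclic σ)
          ∘ₗ map β (map β β)
        = map β (map β β) ∘ₗ (LinearMap.id + superCyclic σ + superCyclic σ ∘ₗ superCyclic σ) :=
      (((Commute.one_left _).add_left hB).add_left (hB.mul_left hB)).eq
    rw [map_comp_yauTwist hβα hβΔ, ← LinearMap.comp_assoc, hcyc, LinearMap.comp_assoc,
      ← LinearMap.comp_assoc _ (map β (map β β)), hcyc, LinearMap.comp_assoc, hjac,
      LinearMap.comp_zero, LinearMap.comp_zero]

lemma IsHomLieSuperbialgebra.yauTwist (h : IsHomLieSuperbialgebra σ br α Δ)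
    (hβ : IsBialgMorphism σ br α Δ σ br α Δ β) :
    IsHomLieSuperbialgebra σ (br.compr₂ β) (β ∘ₗ α) (Δ ∘ₗ β) := by
  obtain ⟨halg, hcoalg, hcompat⟩ := h
  obtain ⟨hβσ, hβα, hβbr, hβΔ⟩ := hβ
  have hΔ : ∀ z, Δ (β z) = map β β (Δ z) := fun z => (LinearMap.congr_fun hβΔ z).symm
  have had : ∀ p x t, adT σ (br.compr₂ β) (β ∘ₗ α) p (β x) (map β β t)
      = map β β (map β β (adT σ br α p x t)) := fun p x t => by
    rw [← LinearMap.comp_apply, adT_yauTwist hβσ hβα hβbr, map_comp]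
    rfl
  refine ⟨halg.yauTwist hβσ hβα hβbr, hcoalg.yauTwist hβσ hβα hβΔ,
    fun p q x y hx hy => ?_⟩
  simp only [LinearMap.comp_apply, LinearMap.compr₂_apply, hΔ, hcompat p q x y hx hy, had,
    map_sub, map_smul]

lemma IsMultiplicative.yauTwist (h : IsMultiplicative br α) (hβα : ∀ x, α (β x) = β (α x))
    (hβbr : ∀ x y, β (br x y) = br (β x) (β y)) :
    IsMultiplicative (br.compr₂ β) (β ∘ₗ α) := fun x y => by
  simp only [LinearMap.comp_apply, LinearMap.compr₂_apply]
  rw [hβα, h x y, hβbr]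

lemma IsComultiplicative.yauTwist (h : IsComultiplicative α Δ)
    (hβα : ∀ x, α (β x) = β (α x)) (hβΔ : map β β ∘ₗ Δ = Δ ∘ₗ β) :
    IsComultiplicative (β ∘ₗ α) (Δ ∘ₗ β) := by
  have hΔβ : ∀ z, Δ (β z) = map β β (Δ z) := fun z => (LinearMap.congr_fun hβΔ z).symm
  have hΔα : ∀ z, Δ (α z) = map α α (Δ z) := fun z => LinearMap.congr_fun h z
  have hmap : map (β ∘ₗ α) (β ∘ₗ α) ∘ₗ map β β = map β β ∘ₗ map β β ∘ₗ map α α := by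
    ext
    simp [hβα]
  ext x
  simp only [LinearMap.comp_apply, hΔβ, hΔα]
  rw [← LinearMap.comp_apply (map (β ∘ₗ α) (β ∘ₗ α)), hmap]
  rfl

lemma IsMultHomLieSuperbialgebra.yauTwist (h : IsMultHomLieSuperbialgebra σ br α Δ)
    (hβ : IsBialgMorphism σ br α Δ σ br α Δ β) :
    IsMultHomLieSuperbialgebra σ (br.compr₂ β) (β ∘ₗ α) (Δ ∘ₗ β) :=
  ⟨h.1.yauTwist hβ, h.2.1.yauTwist hβ.2.1 hβ.2.2.1, h.2.2.yauTwist hβ.2.1 hβ.2.2.2⟩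

end YauTwist

theorem lieSuperbialgebra_yau_twist_general
    {K : Type*} [Field K] {L : Type*} [AddCommGroup L] [Module K L]
    (σ : L →ₗ[K] L) (br : L →ₗ[K] L →ₗ[K] L) (Δ : L →ₗ[K] L ⊗[K] L)
    (β : L →ₗ[K] L)
    (hbi : IsHomLieSuperbialgebra σ br (LinearMap.id : L →ₗ[K] L) Δ)
    (hβσ : ∀ x, σ (β x) = β (σ x))
    (hβbr : ∀ x y, β (br x y) = br (β x) (β y))
    (hβΔ : TensorProduct.map β β ∘ₗ Δ = Δ ∘ₗ β) :
    IsMultHomLieSuperbialgebra σ (br.compr₂ β) β (Δ ∘ₗ β) :=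
  have hmult : IsMultHomLieSuperbialgebra σ br LinearMap.id Δ :=
    ⟨hbi, fun _ _ => rfl, by rw [IsComultiplicative, TensorProduct.map_id]; rfl⟩
  hmult.yauTwist ⟨hβσ, fun _ => rfl, hβbr, hβΔ⟩

/-- Twisting a Lie superbialgebra by an endomorphism yields a
multiplicative Hom-Lie superbialgebra. -/
theorem lieSuperbialgebra_yau_twist
    {K : Type*} [Field K] [CharZero K] {L : Type*} [AddCommGroup L] [Module K L]
    (σ : L →ₗ[K] L) (br : L →ₗ[K] L →ₗ[K] L) (Δ : L →ₗ[K] L ⊗[K] L)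
    (β : L →ₗ[K] L)
    (hbi : IsHomLieSuperbialgebra σ br (LinearMap.id : L →ₗ[K] L) Δ)
    (hβσ : ∀ x, σ (β x) = β (σ x))
    (hβbr : ∀ x y, β (br x y) = br (β x) (β y))
    (hβΔ : TensorProduct.map β β ∘ₗ Δ = Δ ∘ₗ β) :
    IsMultHomLieSuperbialgebra σ (br.compr₂ β) β (Δ ∘ₗ β) :=
  lieSuperbialgebra_yau_twist_general σ br Δ β hbi hβσ hβbr hβΔ
end

section
/- Let (L, [·,·], Δ, α) be a multiplicative Hom-Lie superbialgebra. Then for every integer n ≥ 0, L_{αⁿ} = (L, αⁿ∘[·,·], Δ∘αⁿ, α^{n+1}) is again a multiplicative Hom-Lie superbialgebra. -/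
open TensorProduct

variable (K : Type*) [Field K] [CharZero K]

variable {K}

/-! Yau's twisting principle: if `β` is an even endomorphism commuting with `α`, multiplicative
for `[·,·]` and comultiplicative for `Δ`, then `(L, β ∘ [·,·], Δ ∘ β, β ∘ α)` is again a
multiplicative Hom-Lie superbialgebra, because each of its axioms is the corresponding axiom of
`L` with `β ∘ β` applied to every tensor factor. The powers `β = αⁿ` satisfy these hypotheses,
and `αⁿ ∘ α = αⁿ⁺¹`. -/

section Twist

variable {K L : Type*} [Field K] [AddCommGroup L] [Module K L]

lemma commute_iff_forall_apply {f g : Module.End K L} :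
    Commute f g ↔ ∀ x, f (g x) = g (f x) := by
  simp only [commute_iff_eq, LinearMap.ext_iff, Module.End.mul_apply]

lemma commute_signPow {σ β : Module.End K L} (hσβ : Commute σ β) (p : ZMod 2) :
    Commute (signPow σ p) β := by
  unfold signPow
  exact ((Commute.one_left β).smul_left _).add_left (hσβ.smul_left _)

lemma commute_signOp_map {M : Type*} [AddCommGroup M] [Module K M]
    {σL f : Module.End K L} {σM g : Module.End K M} (hf : Commute σL f) (hg : Commute σM g) :
    Commute (signOp σL σM) (TensorProduct.map f g) := by
  have hmap {a : Module.End K L} {b : Module.End K M} (ha : Commute a f) (hb : Commute b g) :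
      Commute (TensorProduct.map a b) (TensorProduct.map f g) := by
    simp only [commute_iff_eq, ← TensorProduct.map_mul, ha.eq, hb.eq]
  unfold signOp
  refine ((((Commute.one_left _).add_left ?_).add_left ?_).sub_left ?_).smul_left _
  exacts [hmap hf (Commute.one_left g), hmap (Commute.one_left f) hg, hmap hf hg]

lemma commute_superCyclic_map {σ f : Module.End K L} (h : Commute σ f) :
    Commute (superCyclic σ) (TensorProduct.map f (TensorProduct.map f f)) := by
  have hff : Commute (TensorProduct.map σ σ) (TensorProduct.map f f) := by
    simp only [commute_iff_eq, ← TensorProduct.map_mul, h.eq]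
  show superCyclic σ ∘ₗ _ = _ ∘ₗ superCyclic σ
  unfold superCyclic
  rw [LinearMap.comp_assoc, LinearMap.comp_assoc, ← Module.End.mul_eq_comp (signOp _ _),
    (commute_signOp_map h hff).eq, Module.End.mul_eq_comp,
    ← LinearMap.comp_assoc _ (TensorProduct.map f (TensorProduct.map f f)),
    ← TensorProduct.map_comp_comm_eq, ← LinearMap.comp_assoc,
    ← LinearMap.comp_assoc, ← TensorProduct.map_map_comp_assoc_eq,
    LinearMap.comp_assoc, LinearMap.comp_assoc]

lemma IsMultiplicative.mul {br : L →ₗ[K] L →ₗ[K] L} {f g : Module.End K L}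
    (hf : IsMultiplicative br f) (hg : IsMultiplicative br g) :
    IsMultiplicative br (f * g) := by
  intro x y
  rw [Module.End.mul_apply, hg, hf]
  rfl

lemma IsMultiplicative.pow {br : L →ₗ[K] L →ₗ[K] L} {α : Module.End K L}
    (h : IsMultiplicative br α) (n : ℕ) : IsMultiplicative br (α ^ n) := by
  induction n with
  | zero => intro x y; rfl
  | succ n ih => rw [pow_succ]; exact ih.mul h

lemma IsComultiplicative.mul {Δ : L →ₗ[K] L ⊗[K] L} {f g : Module.End K L}
    (hf : IsComultiplicative f Δ) (hg : IsComultiplicative g Δ) :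
    IsComultiplicative (f * g) Δ := by
  unfold IsComultiplicative at *
  rw [Module.End.mul_eq_comp, ← LinearMap.comp_assoc, hf, LinearMap.comp_assoc, hg,
    ← LinearMap.comp_assoc, ← TensorProduct.map_comp]

lemma IsComultiplicative.pow {Δ : L →ₗ[K] L ⊗[K] L} {α : Module.End K L}
    (h : IsComultiplicative α Δ) (n : ℕ) : IsComultiplicative (α ^ n) Δ := by
  induction n with
  | zero => ext x; simp
  | succ n ih => rw [pow_succ]; exact ih.mul h

variable {σ : Module.End K L} {br : L →ₗ[K] L →ₗ[K] L} {α β : Module.End K L}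
  {Δ : L →ₗ[K] L ⊗[K] L}

lemma IsHomLieSuperalgebra.twist (h : IsHomLieSuperalgebra σ br α) (hσβ : Commute σ β)
    (hβ : IsMultiplicative br β) : IsHomLieSuperalgebra σ (br.compr₂ β) (β * α) := by
  obtain ⟨hσσ, hσbr, hσα, hskew, hjac⟩ := h
  have hjac' : ∀ a b c, br.compr₂ β ((β * α) a) (br.compr₂ β b c)
      = β (β (br (α a) (br b c))) := by
    intro a b c
    rw [LinearMap.compr₂_apply, LinearMap.compr₂_apply, Module.End.mul_apply, ← hβ]
  refine ⟨hσσ, fun x y ↦ ?_, commute_iff_forall_apply.mp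
    (hσβ.mul_right (commute_iff_forall_apply.mpr hσα)), fun p q x y hx hy ↦ ?_,
    fun p q r x y z hx hy hz ↦ ?_⟩
  · simp only [LinearMap.compr₂_apply, commute_iff_forall_apply.mp hσβ, hσbr]
  · simp only [LinearMap.compr₂_apply, hskew p q x y hx hy, map_smul]
  · simpa only [hjac', map_add, map_smul, map_zero] using
      congr(β (β $(hjac p q r x y z hx hy hz)))

lemma IsMultiplicative.twist (h : IsMultiplicative br α) (hαβ : Commute α β)
    (hβ : IsMultiplicative br β) : IsMultiplicative (br.compr₂ β) (β * α) := by
  intro x y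
  simp only [LinearMap.compr₂_apply, Module.End.mul_apply, commute_iff_forall_apply.mp hαβ]
  rw [h, hβ]

lemma map_twist_comp_twist (hαβ : Commute α β) (hβ : IsComultiplicative β Δ) :
    TensorProduct.map (β * α) (Δ ∘ₗ β) ∘ₗ (Δ ∘ₗ β)
      = TensorProduct.map (β * β) (TensorProduct.map (β * β) (β * β))
          ∘ₗ TensorProduct.map α Δ ∘ₗ Δ := by
  have hβα : β * α * β = (β * β) * α := by rw [mul_assoc, hαβ.eq, mul_assoc]
  have hΔββ : Δ ∘ₗ β ∘ₗ β = TensorProduct.map (β * β) (β * β) ∘ₗ Δ := hβ.mul hβ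
  rw [hβ, ← LinearMap.comp_assoc, ← TensorProduct.map_comp, ← Module.End.mul_eq_comp _ β, hβα,
    ← hβ, LinearMap.comp_assoc, hΔββ, Module.End.mul_eq_comp, TensorProduct.map_comp,
    LinearMap.comp_assoc]

lemma IsHomLieSupercoalgebra.twist (h : IsHomLieSupercoalgebra σ α Δ) (hσβ : Commute σ β)
    (hαβ : Commute α β) (hβ : IsComultiplicative β Δ) :
    IsHomLieSupercoalgebra σ (β * α) (Δ ∘ₗ β) := by
  obtain ⟨hσσ, hσα, hσΔ, him, hcojac⟩ := h
  have hσββ : Commute σ (β * β) := hσβ.mul_right hσβ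
  have hcyc := commute_superCyclic_map hσββ
  have hcycSum : Commute (LinearMap.id + superCyclic σ + superCyclic σ ∘ₗ superCyclic σ)
      (TensorProduct.map (β * β) (TensorProduct.map (β * β) (β * β))) :=
    ((Commute.one_left _).add_left hcyc).add_left (hcyc.mul_left hcyc)
  refine ⟨hσσ, commute_iff_forall_apply.mp
    (hσβ.mul_right (commute_iff_forall_apply.mpr hσα)), ?_, fun x ↦ him (β x), ?_⟩
  · rw [← LinearMap.comp_assoc, hσΔ, LinearMap.comp_assoc, ← Module.End.mul_eq_comp σ β,
      hσβ.eq, Module.End.mul_eq_comp, LinearMap.comp_assoc]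
  · rw [map_twist_comp_twist hαβ hβ, ← LinearMap.comp_assoc, ← Module.End.mul_eq_comp (_ + _ + _),
      hcycSum.eq, Module.End.mul_eq_comp, LinearMap.comp_assoc, hcojac, LinearMap.comp_zero]

lemma IsComultiplicative.twist (h : IsComultiplicative α Δ) (hαβ : Commute α β)
    (hβ : IsComultiplicative β Δ) : IsComultiplicative (β * α) (Δ ∘ₗ β) := by
  have hβ' : Commute β (β * α) := (Commute.refl β).mul_right hαβ.symm
  unfold IsComultiplicative
  rw [LinearMap.comp_assoc, ← Module.End.mul_eq_comp β, hβ'.eq, Module.End.mul_eq_comp,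
    ← LinearMap.comp_assoc, hβ.mul h, LinearMap.comp_assoc]

lemma adT_twist_comp_map (hσβ : Commute σ β) (hαβ : Commute α β)
    (hβ : IsMultiplicative br β) (p : ZMod 2) (x : L) :
    adT σ (br.compr₂ β) (β * α) p (β x) ∘ₗ TensorProduct.map β β
      = TensorProduct.map (β * β) (β * β) ∘ₗ adT σ br α p x := by
  have hbr : br.compr₂ β (β x) * β = β * β * br x := by
    ext y
    rw [Module.End.mul_apply, LinearMap.compr₂_apply, ← hβ]
    rfl
  have hα : β * α * β = β * β * α := by rw [mul_assoc, hαβ.eq, mul_assoc]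
  have hs : β * α * signPow σ p * β = β * β * (α * signPow σ p) := by
    rw [mul_assoc, (commute_signPow hσβ p).eq, ← mul_assoc, hα, mul_assoc]
  simp only [adT, ← Module.End.mul_eq_comp, add_mul, mul_add, ← TensorProduct.map_mul, hbr, hα,
    hs]

lemma IsMultHomLieSuperbialgebra.twist (h : IsMultHomLieSuperbialgebra σ br α Δ)
    (hσβ : Commute σ β) (hαβ : Commute α β) (hβbr : IsMultiplicative br β)
    (hβΔ : IsComultiplicative β Δ) :
    IsMultHomLieSuperbialgebra σ (br.compr₂ β) (β * α) (Δ ∘ₗ β) := by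
  obtain ⟨⟨halg, hcoalg, hcompat⟩, hmul, hcomul⟩ := h
  refine ⟨⟨halg.twist hσβ hβbr, hcoalg.twist hσβ hαβ hβΔ, fun p q x y hx hy ↦ ?_⟩,
    hmul.twist hαβ hβbr, hcomul.twist hαβ hβΔ⟩
  have had (r : ZMod 2) (a : L) (t : L ⊗[K] L) :
      adT σ (br.compr₂ β) (β * α) r ((β * α) a) (TensorProduct.map β β t)
        = TensorProduct.map (β * β) (β * β) (adT σ br α r (α a) t) :=
    LinearMap.congr_fun (adT_twist_comp_map hσβ hαβ hβbr r (α a)) t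
  have hΔ (t : L) : Δ (β t) = TensorProduct.map β β (Δ t) := LinearMap.congr_fun hβΔ t
  have hΔββ (t : L) : Δ (β (β t)) = TensorProduct.map (β * β) (β * β) (Δ t) :=
    LinearMap.congr_fun (hβΔ.mul hβΔ) t
  simp only [LinearMap.comp_apply, LinearMap.compr₂_apply, hΔββ, hcompat p q x y hx hy, hΔ,
    had, map_sub, map_smul]

end Twist

theorem multHomLieSuperbialgebra_pow_twist_general
    {K : Type*} [Field K] {L : Type*} [AddCommGroup L] [Module K L]
    (σ : L →ₗ[K] L) (br : L →ₗ[K] L →ₗ[K] L) (α : L →ₗ[K] L) (Δ : L →ₗ[K] L ⊗[K] L)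
    (hbi : IsMultHomLieSuperbialgebra σ br α Δ) (n : ℕ) :
    IsMultHomLieSuperbialgebra σ (br.compr₂ (α ^ n)) (α ^ (n + 1)) (Δ ∘ₗ (α ^ n)) := by
  have ⟨⟨⟨_, _, hσα, _⟩, _⟩, hmul, hcomul⟩ := hbi
  rw [pow_succ]
  exact hbi.twist ((commute_iff_forall_apply.mpr hσα).pow_right n) (Commute.self_pow α n)
    (hmul.pow n) (hcomul.pow n)

/-- A multiplicative Hom-Lie superbialgebra yields an infinite
sequence of multiplicative Hom-Lie superbialgebras `L_{αⁿ}`. -/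
theorem multHomLieSuperbialgebra_pow_twist
    {K : Type*} [Field K] [CharZero K] {L : Type*} [AddCommGroup L] [Module K L]
    (σ : L →ₗ[K] L) (br : L →ₗ[K] L →ₗ[K] L) (α : L →ₗ[K] L) (Δ : L →ₗ[K] L ⊗[K] L)
    (hbi : IsMultHomLieSuperbialgebra σ br α Δ) (n : ℕ) :
    IsMultHomLieSuperbialgebra σ (br.compr₂ (α ^ n)) (α ^ (n + 1)) (Δ ∘ₗ (α ^ n)) :=
  multHomLieSuperbialgebra_pow_twist_general σ br α Δ hbi n
end

section
/- Let g be a Lie superbialgebra and let α, β ∈ Aut(g), the group of Lie superbialgebra automorphisms of g. Then the Hom-Lie superbialgebras g_α = (g, α∘[·,·], Δ∘α, α) and g_β = (g, β∘[·,·], Δ∘β, β) are isomorphic if and only if α and β are conjugate in Aut(g). -/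
open TensorProduct

variable (K : Type*) [Field K] [CharZero K]

variable {K}

/-! A linear map `f` intertwines the twisted structures iff it commutes with the twisting maps and
is a morphism of the untwisted ones: the twisted bracket condition is the untwisted one followed by
`β`, which is injective, and the twisted cobracket condition is the untwisted one precomposed with
`α`, which is surjective. -/

section Twist

variable {K : Type*} [Field K] {L L₂ : Type*}
  [AddCommGroup L] [Module K L] [AddCommGroup L₂] [Module K L₂]
  {σ₁ : L →ₗ[K] L} {br₁ : L →ₗ[K] L →ₗ[K] L} {Δ₁ : L →ₗ[K] L ⊗[K] L}
  {σ₂ : L₂ →ₗ[K] L₂} {br₂ : L₂ →ₗ[K] L₂ →ₗ[K] L₂} {Δ₂ : L₂ →ₗ[K] L₂ ⊗[K] L₂}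
  {f : L →ₗ[K] L₂}

theorem IsBialgMorphism.twist
    (hf : IsBialgMorphism σ₁ br₁ LinearMap.id Δ₁ σ₂ br₂ LinearMap.id Δ₂ f)
    {α : L →ₗ[K] L} {β : L₂ →ₗ[K] L₂} (hc : f ∘ₗ α = β ∘ₗ f) :
    IsBialgMorphism σ₁ (br₁.compr₂ α) α (Δ₁ ∘ₗ α) σ₂ (br₂.compr₂ β) β (Δ₂ ∘ₗ β) f := by
  obtain ⟨hσ, -, hbr, hΔ⟩ := hf
  have hc' (x : L) : f (α x) = β (f x) := LinearMap.congr_fun hc x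
  refine ⟨hσ, fun x => (hc' x).symm, fun x y => ?_, ?_⟩
  · simp only [LinearMap.compr₂_apply, hc', hbr]
  · rw [← LinearMap.comp_assoc, hΔ, LinearMap.comp_assoc, hc, LinearMap.comp_assoc]

theorem IsBialgMorphism.untwist {α : L ≃ₗ[K] L} {β : L₂ ≃ₗ[K] L₂}
    (hf : IsBialgMorphism σ₁ (br₁.compr₂ α.toLinearMap) α.toLinearMap (Δ₁ ∘ₗ α.toLinearMap)
      σ₂ (br₂.compr₂ β.toLinearMap) β.toLinearMap (Δ₂ ∘ₗ β.toLinearMap) f) :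
    IsBialgMorphism σ₁ br₁ LinearMap.id Δ₁ σ₂ br₂ LinearMap.id Δ₂ f
      ∧ f ∘ₗ α.toLinearMap = β.toLinearMap ∘ₗ f := by
  obtain ⟨hσ, hα, hbr, hΔ⟩ := hf
  have hc : f ∘ₗ α.toLinearMap = β.toLinearMap ∘ₗ f := LinearMap.ext fun x => (hα x).symm
  refine ⟨⟨hσ, fun _ => rfl, fun x y => β.injective ?_, ?_⟩, hc⟩
  · exact (hα _).trans (by simpa only [LinearMap.compr₂_apply, LinearEquiv.coe_coe] using hbr x y)
  · refine LinearMap.ext fun x => ?_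
    simpa only [LinearMap.comp_apply, LinearEquiv.coe_coe, LinearEquiv.apply_symm_apply, hα]
      using LinearMap.congr_fun hΔ (α.symm x)

theorem isBialgMorphism_twist_iff {α : L ≃ₗ[K] L} {β : L₂ ≃ₗ[K] L₂} :
    IsBialgMorphism σ₁ (br₁.compr₂ α.toLinearMap) α.toLinearMap (Δ₁ ∘ₗ α.toLinearMap)
        σ₂ (br₂.compr₂ β.toLinearMap) β.toLinearMap (Δ₂ ∘ₗ β.toLinearMap) f
      ↔ IsBialgMorphism σ₁ br₁ LinearMap.id Δ₁ σ₂ br₂ LinearMap.id Δ₂ f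
        ∧ f ∘ₗ α.toLinearMap = β.toLinearMap ∘ₗ f :=
  ⟨IsBialgMorphism.untwist, fun ⟨hf, hc⟩ => hf.twist hc⟩

end Twist

theorem homLieSuperbialgebra_twist_iso_iff_conjugate_general
    {K : Type*} [Field K] {G : Type*} [AddCommGroup G] [Module K G]
    (σ : G →ₗ[K] G) (br : G →ₗ[K] G →ₗ[K] G) (Δ : G →ₗ[K] G ⊗[K] G)
    (α β : G ≃ₗ[K] G) :
    (∃ γ : G ≃ₗ[K] G,
        IsBialgMorphism σ (br.compr₂ α.toLinearMap) α.toLinearMap (Δ ∘ₗ α.toLinearMap)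
          σ (br.compr₂ β.toLinearMap) β.toLinearMap (Δ ∘ₗ β.toLinearMap) γ.toLinearMap)
      ↔ (∃ γ : G ≃ₗ[K] G,
          IsBialgMorphism σ br LinearMap.id Δ σ br LinearMap.id Δ γ.toLinearMap
            ∧ γ.toLinearMap ∘ₗ α.toLinearMap = β.toLinearMap ∘ₗ γ.toLinearMap) :=
  exists_congr fun _ => isBialgMorphism_twist_iff

/-- For automorphisms `α, β` of a Lie superbialgebra `g`,
`g_α ≅ g_β` iff `α` and `β` are conjugate in `Aut(g)`. -/
theorem homLieSuperbialgebra_twist_iso_iff_conjugate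
    {K : Type*} [Field K] [CharZero K] {G : Type*} [AddCommGroup G] [Module K G]
    (σ : G →ₗ[K] G) (br : G →ₗ[K] G →ₗ[K] G) (Δ : G →ₗ[K] G ⊗[K] G)
    (hg : IsHomLieSuperbialgebra σ br (LinearMap.id : G →ₗ[K] G) Δ)
    (α β : G ≃ₗ[K] G)
    (hα : IsBialgMorphism σ br LinearMap.id Δ σ br LinearMap.id Δ α.toLinearMap)
    (hβ : IsBialgMorphism σ br LinearMap.id Δ σ br LinearMap.id Δ β.toLinearMap) :
    (∃ γ : G ≃ₗ[K] G,
        IsBialgMorphism σ (br.compr₂ α.toLinearMap) α.toLinearMap (Δ ∘ₗ α.toLinearMap)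
          σ (br.compr₂ β.toLinearMap) β.toLinearMap (Δ ∘ₗ β.toLinearMap) γ.toLinearMap)
      ↔ (∃ γ : G ≃ₗ[K] G,
          IsBialgMorphism σ br LinearMap.id Δ σ br LinearMap.id Δ γ.toLinearMap
            ∧ γ.toLinearMap ∘ₗ α.toLinearMap = β.toLinearMap ∘ₗ γ.toLinearMap) :=
  homLieSuperbialgebra_twist_iso_iff_conjugate_general σ br Δ α β
end

section
/- Let (L, [·,·], Δ, r) be a coboundary Lie superbialgebra and let β : L → L be an even Lie superalgebra morphism such that β^{⊗2}(r) = r. Then L_β = (L, β∘[·,·], Δ∘β, β, r) is a multiplicative coboundary Hom-Lie superbialgebra. If moreover L is a quasi-triangular Lie superbialgebra, then L_β is a multiplicative quasi-triangular Hom-Lie superbialgebra. -/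
/-!
Since `β` is an even Lie superalgebra morphism fixing `r`, every structure map of the twist
`L_β` is the image of the corresponding one of `L` under a tensor power of `β`: the twisted
adjoint action is `ad^β_x = β^{⊗2} ∘ ad_x`, the twisted Hom-super-Jacobi sum is `β²` of the
super-Jacobi sum, and the twisted `[[r,r]]^β` is `β^{⊗3}[[r,r]]`. The one identity that needs
`r` is `Δ ∘ β = β^{⊗2} ∘ Δ`: on a homogeneous `x` it reads
`ad_{β x}(β^{⊗2} r) = β^{⊗2}(ad_x r)`, and homogeneous elements span `L` because `2` is
invertible in `K`.
-/

open TensorProduct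

variable (K : Type*) [Field K] [CharZero K]

variable {K}

section YauTwist

variable {K : Type*} [Field K] {L : Type*} [AddCommGroup L] [Module K L]

lemma IsHomog.map {σ β : L →ₗ[K] L} {p : ZMod 2} {x : L} (hx : IsHomog σ p x)
    (hβσ : ∀ x, σ (β x) = β (σ x)) : IsHomog σ p (β x) := by
  rw [IsHomog, hβσ, hx, map_smul]

lemma exists_isHomog_zero_add_isHomog_one [NeZero (2 : K)] {σ : L →ₗ[K] L}
    (hσσ : σ ∘ₗ σ = LinearMap.id) (x : L) :
    ∃ x₀ x₁, IsHomog σ 0 x₀ ∧ IsHomog σ 1 x₁ ∧ x = x₀ + x₁ := by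
  have hσσ' : σ (σ x) = x := LinearMap.congr_fun hσσ x
  refine ⟨(2 : K)⁻¹ • (x + σ x), (2 : K)⁻¹ • (x - σ x), ?_, ?_, ?_⟩
  · simp only [IsHomog, ZMod.val_zero, pow_zero, one_smul, map_smul, map_add, hσσ', add_comm]
  · simp only [IsHomog, ZMod.val_one, pow_one, map_smul, map_sub, hσσ']
    module
  · rw [← smul_add, add_add_sub_cancel, ← two_smul K, smul_smul,
      inv_mul_cancel₀ two_ne_zero, one_smul]

lemma linearMap_ext_of_isHomog [NeZero (2 : K)] {M : Type*} [AddCommGroup M] [Module K M]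
    {σ : L →ₗ[K] L} (hσσ : σ ∘ₗ σ = LinearMap.id) {f g : L →ₗ[K] M}
    (h : ∀ p x, IsHomog σ p x → f x = g x) : f = g := by
  ext x
  obtain ⟨x₀, x₁, hx₀, hx₁, rfl⟩ := exists_isHomog_zero_add_isHomog_one hσσ x
  rw [map_add, map_add, h 0 x₀ hx₀, h 1 x₁ hx₁]

lemma signPow_comp_comm {σ β : L →ₗ[K] L} (hβσ : σ ∘ₗ β = β ∘ₗ σ) (p : ZMod 2) :
    signPow σ p ∘ₗ β = β ∘ₗ signPow σ p := by
  simp only [signPow, LinearMap.add_comp, LinearMap.comp_add, LinearMap.smul_comp,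
    LinearMap.comp_smul, LinearMap.id_comp, LinearMap.comp_id, hβσ]

lemma signOp_comp_map_comm {M : Type*} [AddCommGroup M] [Module K M]
    {σ f : L →ₗ[K] L} {σM F : M →ₗ[K] M} (hf : σ ∘ₗ f = f ∘ₗ σ) (hF : σM ∘ₗ F = F ∘ₗ σM) :
    signOp σ σM ∘ₗ TensorProduct.map f F = TensorProduct.map f F ∘ₗ signOp σ σM := by
  simp only [signOp, LinearMap.smul_comp, LinearMap.comp_smul, LinearMap.add_comp,
    LinearMap.comp_add, LinearMap.sub_comp, LinearMap.comp_sub, LinearMap.id_comp,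
    LinearMap.comp_id, ← TensorProduct.map_comp, hf, hF]

lemma superCyclic_comp_map_comm {σ β : L →ₗ[K] L} (hβσ : σ ∘ₗ β = β ∘ₗ σ) :
    superCyclic σ ∘ₗ TensorProduct.map β (TensorProduct.map β β)
      = TensorProduct.map β (TensorProduct.map β β) ∘ₗ superCyclic σ := by
  have hββ : TensorProduct.map σ σ ∘ₗ TensorProduct.map β β
      = TensorProduct.map β β ∘ₗ TensorProduct.map σ σ := by
    rw [← TensorProduct.map_comp, ← TensorProduct.map_comp, hβσ]
  refine LinearMap.ext fun v => ?_
  simp only [superCyclic, LinearMap.comp_apply]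
  rw [← LinearMap.comp_apply (signOp σ _), signOp_comp_map_comm hβσ hββ, LinearMap.comp_apply,
    LinearEquiv.coe_coe, LinearEquiv.coe_coe, ← TensorProduct.map_comm]
  exact (TensorProduct.map_map_assoc β β β _).symm

lemma adT_compr₂ (σ : L →ₗ[K] L) (br : L →ₗ[K] L →ₗ[K] L) (β : L →ₗ[K] L) (p : ZMod 2)
    (x : L) : adT σ (br.compr₂ β) β p x = TensorProduct.map β β ∘ₗ adT σ br LinearMap.id p x := by
  have hbx : br.compr₂ β x = β ∘ₗ br x := rfl
  rw [adT, adT, LinearMap.comp_add, ← TensorProduct.map_comp, ← TensorProduct.map_comp, hbx,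
    LinearMap.id_comp, LinearMap.comp_id]

lemma adT_map_comp_map {σ β : L →ₗ[K] L} {br : L →ₗ[K] L →ₗ[K] L}
    (hβσ : σ ∘ₗ β = β ∘ₗ σ) (hβbr : IsMultiplicative br β) (p : ZMod 2) (x : L) :
    adT σ br LinearMap.id p (β x) ∘ₗ TensorProduct.map β β
      = TensorProduct.map β β ∘ₗ adT σ br LinearMap.id p x := by
  have hbr : br (β x) ∘ₗ β = β ∘ₗ br x := LinearMap.ext fun y => (hβbr x y).symm
  simp only [adT, LinearMap.add_comp, LinearMap.comp_add, ← TensorProduct.map_comp,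
    LinearMap.id_comp, LinearMap.comp_id, hbr, signPow_comp_comm hβσ]

lemma IsMultiplicative.compr₂ {br : L →ₗ[K] L →ₗ[K] L} {β : L →ₗ[K] L}
    (hβbr : IsMultiplicative br β) : IsMultiplicative (br.compr₂ β) β := by
  intro x y
  rw [LinearMap.compr₂_apply, LinearMap.compr₂_apply, hβbr x y]

lemma IsComultiplicative.comp {β : L →ₗ[K] L} {Δ : L →ₗ[K] L ⊗[K] L}
    (hΔ : IsComultiplicative β Δ) : IsComultiplicative β (Δ ∘ₗ β) :=
  LinearMap.ext fun x => LinearMap.congr_fun hΔ (β x)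

variable {σ β : L →ₗ[K] L} {br : L →ₗ[K] L →ₗ[K] L} {Δ : L →ₗ[K] L ⊗[K] L} {r : L ⊗[K] L}

lemma IsCoboundary.isComultiplicative [NeZero (2 : K)]
    (hc : IsCoboundary σ br LinearMap.id Δ r) (hβσ : ∀ x, σ (β x) = β (σ x))
    (hβbr : IsMultiplicative br β) (hβr : TensorProduct.map β β r = r) :
    IsComultiplicative β Δ := by
  obtain ⟨⟨⟨hσσ, -⟩, -⟩, -, hΔr⟩ := hc
  refine linearMap_ext_of_isHomog hσσ fun p x hx => ?_
  rw [LinearMap.comp_apply, LinearMap.comp_apply, hΔr p (β x) (hx.map hβσ), hΔr p x hx]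
  conv_lhs => rw [← hβr]
  exact LinearMap.congr_fun (adT_map_comp_map (LinearMap.ext hβσ) hβbr p x) r

lemma IsHomLieSuperalgebra.twist_s12 (h : IsHomLieSuperalgebra σ br LinearMap.id)
    (hβσ : ∀ x, σ (β x) = β (σ x)) (hβbr : IsMultiplicative br β) :
    IsHomLieSuperalgebra σ (br.compr₂ β) β := by
  obtain ⟨hσσ, hσbr, -, hskew, hJac⟩ := h
  refine ⟨hσσ, fun x y => ?_, hβσ, fun p q x y hx hy => ?_, fun p q s x y z hx hy hz => ?_⟩
  · rw [LinearMap.compr₂_apply, LinearMap.compr₂_apply, hβσ, hσbr]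
  · rw [LinearMap.compr₂_apply, LinearMap.compr₂_apply, hskew p q x y hx hy, map_smul]
  · have hβbr' : ∀ x y, br (β x) (β y) = β (br x y) := fun x y => (hβbr x y).symm
    have hJ := congrArg (fun v => β (β v)) (hJac p q s x y z hx hy hz)
    simpa only [LinearMap.id_apply, map_add, map_smul, map_zero, LinearMap.compr₂_apply,
      hβbr'] using hJ

lemma IsHomLieSupercoalgebra.twist_s12 (h : IsHomLieSupercoalgebra σ LinearMap.id Δ)
    (hβσ : ∀ x, σ (β x) = β (σ x)) (hΔβ : IsComultiplicative β Δ) :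
    IsHomLieSupercoalgebra σ β (Δ ∘ₗ β) := by
  obtain ⟨hσσ, -, hσΔ, hcoskew, hcoJac⟩ := h
  have hσβ : σ ∘ₗ β = β ∘ₗ σ := LinearMap.ext hβσ
  refine ⟨hσσ, hβσ, ?_, fun x => hcoskew (β x), ?_⟩
  · rw [← LinearMap.comp_assoc, hσΔ, LinearMap.comp_assoc, hσβ, LinearMap.comp_assoc]
  set B := TensorProduct.map β (TensorProduct.map β β)
  set J := LinearMap.id + superCyclic σ + superCyclic σ ∘ₗ superCyclic σ
  have hξB : superCyclic σ ∘ₗ B = B ∘ₗ superCyclic σ := superCyclic_comp_map_comm hσβ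
  have hJB : J ∘ₗ B = B ∘ₗ J := by
    simp only [J, LinearMap.add_comp, LinearMap.comp_add, LinearMap.id_comp, LinearMap.comp_id]
    rw [hξB, LinearMap.comp_assoc, hξB, ← LinearMap.comp_assoc, hξB, LinearMap.comp_assoc]
  have hmap : TensorProduct.map β (Δ ∘ₗ β) = B ∘ₗ TensorProduct.map LinearMap.id Δ := by
    rw [hΔβ, ← TensorProduct.map_comp, LinearMap.comp_id]
  calc J ∘ₗ TensorProduct.map β (Δ ∘ₗ β) ∘ₗ Δ ∘ₗ β
      = B ∘ₗ (J ∘ₗ TensorProduct.map LinearMap.id Δ ∘ₗ Δ) ∘ₗ β := by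
        simp only [hmap, ← LinearMap.comp_assoc, hJB]
    _ = 0 := by rw [hcoJac, LinearMap.zero_comp, LinearMap.comp_zero]

lemma IsHomLieSuperbialgebra.twist_s12 (h : IsHomLieSuperbialgebra σ br LinearMap.id Δ)
    (hβσ : ∀ x, σ (β x) = β (σ x)) (hβbr : IsMultiplicative br β)
    (hΔβ : IsComultiplicative β Δ) :
    IsHomLieSuperbialgebra σ (br.compr₂ β) β (Δ ∘ₗ β) := by
  refine ⟨h.1.twist_s12 hβσ hβbr, h.2.1.twist_s12 hβσ hΔβ, fun p q x y hx hy => ?_⟩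
  have hΔβ' : ∀ z, Δ (β z) = TensorProduct.map β β (Δ z) := LinearMap.congr_fun hΔβ
  simp only [LinearMap.comp_apply, LinearMap.compr₂_apply, adT_compr₂, hβbr x y, hΔβ',
    h.2.2 p q (β x) (β y) (hx.map hβσ) (hy.map hβσ), LinearMap.id_apply,
    map_sub, map_smul]

lemma IsCoboundary.twist_s12 [NeZero (2 : K)] (hc : IsCoboundary σ br LinearMap.id Δ r)
    (hβσ : ∀ x, σ (β x) = β (σ x)) (hβbr : IsMultiplicative br β)
    (hβr : TensorProduct.map β β r = r) :
    IsCoboundary σ (br.compr₂ β) β (Δ ∘ₗ β) r := by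
  have hΔβ := hc.isComultiplicative hβσ hβbr hβr
  refine ⟨hc.1.twist_s12 hβσ hβbr hΔβ, hβr, fun p x hx => ?_⟩
  rw [LinearMap.congr_fun hΔβ x, adT_compr₂, LinearMap.comp_apply, LinearMap.comp_apply,
    hc.2.2 p x hx]

lemma br1213_compr₂ (σ : L →ₗ[K] L) (br : L →ₗ[K] L →ₗ[K] L) (β : L →ₗ[K] L) (r r' : L ⊗[K] L) :
    br1213 σ (br.compr₂ β) β r r'
      = TensorProduct.map β (TensorProduct.map β β) (br1213 σ br LinearMap.id r r') := by
  rw [br1213, br1213, TensorProduct.lift_compr₂, ← LinearMap.comp_apply (TensorProduct.map β _),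
    ← TensorProduct.map_comp, ← TensorProduct.map_comp, LinearMap.comp_id]

lemma br1223_compr₂ (br : L →ₗ[K] L →ₗ[K] L) (β : L →ₗ[K] L) (r r' : L ⊗[K] L) :
    br1223 (br.compr₂ β) β r r'
      = TensorProduct.map β (TensorProduct.map β β) (br1223 br LinearMap.id r r') := by
  rw [br1223, br1223, TensorProduct.lift_compr₂,
    ← LinearMap.comp_apply (TensorProduct.map β (TensorProduct.map β β)),
    ← TensorProduct.map_comp, ← LinearMap.comp_assoc, ← TensorProduct.map_comp,
    LinearMap.comp_id]

lemma br1323_compr₂ (σ : L →ₗ[K] L) (br : L →ₗ[K] L →ₗ[K] L) (β : L →ₗ[K] L) (r r' : L ⊗[K] L) :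
    br1323 σ (br.compr₂ β) β r r'
      = TensorProduct.map β (TensorProduct.map β β) (br1323 σ br LinearMap.id r r') := by
  rw [br1323, br1323, LinearEquiv.coe_coe, TensorProduct.map_map_assoc,
    TensorProduct.lift_compr₂, ← LinearMap.comp_apply (TensorProduct.map (TensorProduct.map β β) β),
    ← TensorProduct.map_comp, ← TensorProduct.map_comp, LinearMap.comp_id]

lemma chybeEl_compr₂ (σ : L →ₗ[K] L) (br : L →ₗ[K] L →ₗ[K] L) (β : L →ₗ[K] L) (r : L ⊗[K] L) :
    chybeEl σ (br.compr₂ β) β r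
      = TensorProduct.map β (TensorProduct.map β β) (chybeEl σ br LinearMap.id r) := by
  rw [chybeEl, chybeEl, br1213_compr₂, br1223_compr₂, br1323_compr₂, map_add, map_add]

lemma IsQuasiTriangular.twist_s12 [NeZero (2 : K)] (hq : IsQuasiTriangular σ br LinearMap.id Δ r)
    (hβσ : ∀ x, σ (β x) = β (σ x)) (hβbr : IsMultiplicative br β)
    (hβr : TensorProduct.map β β r = r) :
    IsQuasiTriangular σ (br.compr₂ β) β (Δ ∘ₗ β) r :=
  ⟨hq.1.twist_s12 hβσ hβbr hβr, by rw [chybeEl_compr₂, hq.2, map_zero]⟩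

end YauTwist

/-- Twisting a coboundary (resp. quasi-triangular) Lie
superbialgebra by a Lie superalgebra endomorphism fixing `r` yields a
multiplicative coboundary (resp. quasi-triangular) Hom-Lie superbialgebra. -/
theorem coboundaryLieSuperbialgebra_yau_twist
    {K : Type*} [Field K] [CharZero K] {L : Type*} [AddCommGroup L] [Module K L]
    (σ : L →ₗ[K] L) (br : L →ₗ[K] L →ₗ[K] L) (Δ : L →ₗ[K] L ⊗[K] L) (r : L ⊗[K] L)
    (hc : IsCoboundary σ br (LinearMap.id : L →ₗ[K] L) Δ r)
    (β : L →ₗ[K] L)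
    (hβσ : ∀ x, σ (β x) = β (σ x))
    (hβbr : ∀ x y, β (br x y) = br (β x) (β y))
    (hβr : TensorProduct.map β β r = r) :
    (IsCoboundary σ (br.compr₂ β) β (Δ ∘ₗ β) r
      ∧ IsMultiplicative (br.compr₂ β) β ∧ IsComultiplicative β (Δ ∘ₗ β))
      ∧ (IsQuasiTriangular σ br (LinearMap.id : L →ₗ[K] L) Δ r →
          IsQuasiTriangular σ (br.compr₂ β) β (Δ ∘ₗ β) r) :=
  ⟨⟨hc.twist_s12 hβσ hβbr hβr, IsMultiplicative.compr₂ hβbr,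
      (hc.isComultiplicative hβσ hβbr hβr).comp⟩,
    fun hq => hq.twist_s12 hβσ hβbr hβr⟩
end
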